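/- arXiv:1805.02039 — 3 statements merged into one kernel-verified Lean document; each statement's English description precedes it below -/
import Mathlib

section
/- In a global graph with r communities of n vertices each (each inducing a complete graph), if the graph has diameter at most 2, then the number of bridges is at least (r−1)·n. -/
open SimpleGraph

variable {r n : ℕ}

/-- Each community (fiber of `Prod.fst`) induces a complete graph. -/
def IntraComplete (G : SimpleGraph (Fin r × Fin n)) : Prop :=
  ∀ u v : Fin r × Fin n, u ≠ v → u.1 = v.1 → G.Adj u v

/-- Number of bridges: edges whose endpoints lie in distinct communities. -/
noncomputable def bridgeCount (G : SimpleGraph (Fin r × Fin n)) : ℕ :=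
  {e ∈ G.edgeSet | ¬ (Sym2.map Prod.fst e).IsDiag}.ncard

/-- A vertex is central if it is an endpoint of a bridge. -/
def IsCentral (G : SimpleGraph (Fin r × Fin n)) (v : Fin r × Fin n) : Prop :=
  ∃ w, G.Adj v w ∧ v.1 ≠ w.1

/-- Number of central vertices. -/
noncomputable def centralCount (G : SimpleGraph (Fin r × Fin n)) : ℕ :=
  {v | IsCentral G v}.ncard

/-- Every two vertices are joined by a path (walk) of length at most `k`. -/
def DiamLe (G : SimpleGraph (Fin r × Fin n)) (k : ℕ) : Prop :=
  ∀ u v : Fin r × Fin n, ∃ p : G.Walk u v, p.length ≤ k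

/-!
Let `B` be the graph of bridges and let `v` be a vertex of minimum `B`-degree. If that degree is
at least `2`, the handshake lemma already gives `r * n` bridges. Otherwise every vertex `u`
outside the community of `v` reaches `v` within two steps, and this path provides a bridge at `u`:
into the community of `v` when `v` has no bridge, and into that community or to the unique
bridge partner `w` of `v` when `v` has exactly one (for `u` in the community of `w`, any bridge
of `u` will do). The bridges chosen at these `(r - 1) * n` vertices are distinct, because no two
of the vertices choose each other.
-/

namespace SimpleGraph

variable {V : Type*} {G : SimpleGraph V}

theorem Walk.eq_or_adj_or_exists_adj_adj_of_length_le_two {u v : V} (p : G.Walk u v)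
    (hp : p.length ≤ 2) : u = v ∨ G.Adj u v ∨ ∃ w, G.Adj u w ∧ G.Adj w v := by
  rcases p with _ | ⟨huw, _ | ⟨hwv, _ | ⟨_, _⟩⟩⟩
  · exact .inl rfl
  · exact .inr (.inl huw)
  · exact .inr (.inr ⟨_, huw, hwv⟩)
  · simp at hp

theorem card_le_card_edgeFinset_of_two_le_degree [Fintype V] [DecidableRel G.Adj]
    (h : ∀ v, 2 ≤ G.degree v) : Fintype.card V ≤ G.edgeFinset.card := by
  have hsum := Finset.card_nsmul_le_sum Finset.univ (G.degree ·) 2 fun v _ => h v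
  rw [sum_degrees_eq_twice_card_edges, smul_eq_mul, Finset.card_univ] at hsum
  omega

theorem ncard_le_ncard_edgeSet_of_adj [Finite V] {S : Set V} {f : V → V}
    (hadj : ∀ u ∈ S, G.Adj u (f u)) (hmutual : ∀ u ∈ S, f u ∈ S → f (f u) ≠ u) :
    S.ncard ≤ G.edgeSet.ncard := by
  refine Set.ncard_le_ncard_of_injOn (fun u => s(u, f u)) (fun u hu => hadj u hu) ?_
    (Set.toFinite _)
  intro u₁ hu₁ u₂ hu₂ heq
  rcases Sym2.eq_iff.mp heq with ⟨h, -⟩ | ⟨h₁₂, h₂₁⟩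
  · exact h
  · exact (hmutual u₁ hu₁ (h₂₁ ▸ hu₂) (by rw [h₂₁, h₁₂])).elim

end SimpleGraph

open SimpleGraph

section Bridges

variable {V ι : Type*}

def bridgeGraph (G : SimpleGraph V) (c : V → ι) : SimpleGraph V where
  Adj u v := G.Adj u v ∧ c u ≠ c v
  symm := ⟨fun _ _ h => ⟨h.1.symm, h.2.symm⟩⟩
  loopless := ⟨fun _ h => h.2 rfl⟩

variable {G : SimpleGraph V} {c : V → ι}

@[simp]
theorem bridgeGraph_adj {u v : V} : (bridgeGraph G c).Adj u v ↔ G.Adj u v ∧ c u ≠ c v :=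
  Iff.rfl

theorem exists_adj_of_diam_le_two (hdiam : ∀ u v : V, ∃ p : G.Walk u v, p.length ≤ 2)
    {u v : V} (huv : u ≠ v) : ∃ x, G.Adj u x ∧ (c x = c v ∨ (bridgeGraph G c).Adj v x) := by
  obtain ⟨p, hp⟩ := hdiam v u
  rcases p.eq_or_adj_or_exists_adj_adj_of_length_le_two hp with rfl | hvu | ⟨x, hvx, hxu⟩
  · exact absurd rfl huv
  · exact ⟨v, hvu.symm, .inl rfl⟩
  · by_cases hx : c x = c v
    · exact ⟨x, hxu.symm, .inl hx⟩
    · exact ⟨x, hxu.symm, .inr ⟨hvx, Ne.symm hx⟩⟩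

variable [Finite V]

theorem ncard_ne_le_ncard_edgeSet_of_isIsolated
    (hdiam : ∀ u v : V, ∃ p : G.Walk u v, p.length ≤ 2) {v : V}
    (hv : (bridgeGraph G c).IsIsolated v) :
    {u | c u ≠ c v}.ncard ≤ (bridgeGraph G c).edgeSet.ncard := by
  have hbridge : ∀ u ∈ {u | c u ≠ c v}, ∃ x, (bridgeGraph G c).Adj u x ∧ c x = c v := by
    intro u hu
    obtain ⟨x, hux, hx | hvx⟩ := exists_adj_of_diam_le_two hdiam (ne_of_apply_ne c hu)
    · exact ⟨x, ⟨hux, fun h => hu (h.trans hx)⟩, hx⟩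
    · exact (hv x hvx).elim
  choose! f hf_adj hf_class using hbridge
  exact ncard_le_ncard_edgeSet_of_adj hf_adj fun u hu hfu => (hfu (hf_class u hu)).elim

theorem ncard_ne_le_ncard_edgeSet_of_unique_adj
    (hdiam : ∀ u v : V, ∃ p : G.Walk u v, p.length ≤ 2)
    (hcentral : ∀ u, ∃ y, (bridgeGraph G c).Adj u y) {v w : V}
    (hvw : (bridgeGraph G c).Adj v w) (huniq : ∀ x, (bridgeGraph G c).Adj v x → x = w) :
    {u | c u ≠ c v}.ncard ≤ (bridgeGraph G c).edgeSet.ncard := by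
  have hbridge : ∀ u ∈ {u | c u ≠ c v}, ∃ y, (bridgeGraph G c).Adj u y ∧
      (u = w → y = v) ∧ (c u = c w → c y ≠ c w) ∧
      (c u ≠ c w → c y = c v ∨ y = w) := by
    intro u hu
    by_cases huw : u = w
    · subst huw
      exact ⟨v, hvw.symm, fun _ => rfl, fun _ => hvw.2, fun h => absurd rfl h⟩
    by_cases hcu : c u = c w
    · obtain ⟨y, hy⟩ := hcentral u
      exact ⟨y, hy, fun h => absurd h huw, fun _ h => hy.2 (hcu.trans h.symm),
        fun h => absurd hcu h⟩
    obtain ⟨x, hux, hx | hvx⟩ := exists_adj_of_diam_le_two hdiam (ne_of_apply_ne c hu)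
    · exact ⟨x, ⟨hux, fun h => hu (h.trans hx)⟩, fun h => absurd h huw,
        fun h => absurd h hcu, fun _ => .inl hx⟩
    · obtain rfl := huniq x hvx
      exact ⟨x, ⟨hux, hcu⟩, fun h => absurd h huw, fun h => absurd h hcu, fun _ => .inr rfl⟩
  choose! f hf_adj hf_w hf_same hf_other using hbridge
  refine ncard_le_ncard_edgeSet_of_adj hf_adj fun u hu hfu hffu => ?_
  by_cases hcu : c u = c w
  · rcases hf_other (f u) hfu (hf_same u hu hcu) with h | h
    · exact hu (hffu ▸ h)
    · exact hfu (by rw [hf_w u hu (hffu ▸ h)])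
  · rcases hf_other u hu hcu with h | h
    · exact hfu h
    · exact hu (by rw [← hffu, h, hf_w w (h ▸ hfu) rfl])

theorem exists_ncard_ne_le_ncard_edgeSet_or_card_le
    (hdiam : ∀ u v : V, ∃ p : G.Walk u v, p.length ≤ 2) :
    (∃ v, {u | c u ≠ c v}.ncard ≤ (bridgeGraph G c).edgeSet.ncard) ∨
      Nat.card V ≤ (bridgeGraph G c).edgeSet.ncard := by
  classical
  have := Fintype.ofFinite V
  by_cases h0 : ∃ v, (bridgeGraph G c).IsIsolated v
  · obtain ⟨v, hv⟩ := h0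
    exact .inl ⟨v, ncard_ne_le_ncard_edgeSet_of_isIsolated hdiam hv⟩
  have hcentral : ∀ u, ∃ y, (bridgeGraph G c).Adj u y := by
    simpa [IsIsolated] using h0
  by_cases h1 : ∃ v, (bridgeGraph G c).degree v = 1
  · obtain ⟨v, hv⟩ := h1
    obtain ⟨w, hvw, huniq⟩ := degree_eq_one_iff_existsUnique_adj.mp hv
    exact .inl ⟨v, ncard_ne_le_ncard_edgeSet_of_unique_adj hdiam hcentral hvw huniq⟩
  have hdeg : ∀ v, 2 ≤ (bridgeGraph G c).degree v := fun v => by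
    have := (degree_pos_iff_exists_adj _ v).mpr (hcentral v)
    have : (bridgeGraph G c).degree v ≠ 1 := fun h => h1 ⟨v, h⟩
    omega
  right
  rw [Nat.card_eq_fintype_card, ← coe_edgeFinset, Set.ncard_coe_finset]
  exact card_le_card_edgeFinset_of_two_le_degree hdeg

end Bridges

theorem bridgeCount_eq_ncard_edgeSet (G : SimpleGraph (Fin r × Fin n)) :
    bridgeCount G = (bridgeGraph G Prod.fst).edgeSet.ncard := by
  unfold bridgeCount
  congr 1
  ext e
  induction e using Sym2.ind with
  | _ u v => simp

theorem ncard_fst_ne (i : Fin r) : {u : Fin r × Fin n | u.1 ≠ i}.ncard = (r - 1) * n := by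
  have : {u : Fin r × Fin n | u.1 ≠ i} = {i}ᶜ ×ˢ Set.univ := by ext; simp
  rw [this, Set.ncard_prod, Set.ncard_univ, Set.ncard_compl]
  simp

theorem stmt_3_general (r n : ℕ) (G : SimpleGraph (Fin r × Fin n)) (h2 : DiamLe G 2) :
    (r - 1) * n ≤ bridgeCount G := by
  rw [bridgeCount_eq_ncard_edgeSet]
  rcases exists_ncard_ne_le_ncard_edgeSet_or_card_le h2 with ⟨v, hv⟩ | hcard
  · rwa [ncard_fst_ne] at hv
  · calc (r - 1) * n ≤ r * n := Nat.mul_le_mul_right n (Nat.sub_le r 1)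
      _ = Nat.card (Fin r × Fin n) := by simp
      _ ≤ _ := hcard

theorem stmt_3 (r n : ℕ) (hr : 2 ≤ r) (G : SimpleGraph (Fin r × Fin n))
    (hG : IntraComplete G) (h2 : DiamLe G 2) :
    (r - 1) * n ≤ bridgeCount G :=
  stmt_3_general r n G h2
end

section
/- In a global graph with r communities of n vertices each (each inducing a complete graph), if the graph has diameter at most 2, then the number of central vertices is at least (r−1)·n + 1. -/
open SimpleGraph

variable {r n : ℕ}

lemma walkAnalysis (G : SimpleGraph (Fin r × Fin n)) {u v : Fin r × Fin n}
    (hne : u.1 ≠ v.1) (p : G.Walk u v) (hp : p.length ≤ 2) :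
    IsCentral G u ∨ ∃ w, G.Adj u w ∧ w.1 = u.1 ∧ G.Adj w v := by
  cases p with
  | nil => exact absurd rfl hne
  | @cons _ b _ h q =>
    by_cases hb : u.1 = b.1
    · cases q with
      | nil => exact absurd hb hne
      | @cons _ c _ h' q' =>
        cases q' with
        | nil => exact Or.inr ⟨b, h, hb.symm, h'⟩
        | cons h'' q'' => simp [SimpleGraph.Walk.length_cons] at hp
    · exact Or.inl ⟨b, h, hb⟩

lemma fiber_ncard (i : Fin r) : ({v : Fin r × Fin n | v.1 = i}).ncard = n := by
  have : {v : Fin r × Fin n | v.1 = i} = (fun x : Fin n => (i, x)) '' Set.univ := by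
    ext v
    constructor
    · rintro hv
      exact ⟨v.2, Set.mem_univ _, by ext <;> simp [hv.symm]⟩
    · rintro ⟨x, -, rfl⟩; rfl
  rw [this, Set.ncard_image_of_injective _ (fun a b hab => by simpa using hab),
    Set.ncard_univ, Nat.card_eq_fintype_card, Fintype.card_fin]

theorem stmt_4 (r n : ℕ) (hr : 2 ≤ r) (hn : 1 ≤ n) (G : SimpleGraph (Fin r × Fin n))
    (hG : IntraComplete G) (h2 : DiamLe G 2) :
    (r - 1) * n + 1 ≤ centralCount G := by
  classical
  set S : Set (Fin r × Fin n) := {v | IsCentral G v} with hS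
  have htot : S.ncard + Sᶜ.ncard = r * n := by
    rw [Set.ncard_add_ncard_compl]
    simp [Nat.card_eq_fintype_card]
  have hrn : (r - 1) * n + n = r * n := by
    have h1 : r - 1 + 1 = r := by omega
    calc (r - 1) * n + n = (r - 1 + 1) * n := by ring
    _ = r * n := by rw [h1]
  have hcc : centralCount G = S.ncard := rfl
  by_cases hT : Sᶜ = ∅
  · rw [hT] at htot
    simp only [Set.ncard_empty, add_zero] at htot
    rw [hcc, htot]
    omega
  · obtain ⟨u, hu⟩ := Set.nonempty_iff_ne_empty.2 hT
    have hu' : ¬ IsCentral G u := hu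
    -- all non-central vertices are in community u.1
    have hsub : Sᶜ ⊆ {v | v.1 = u.1} := by
      intro v hv
      have hv' : ¬ IsCentral G v := hv
      by_contra hne
      have hne' : u.1 ≠ v.1 := fun h => hne h.symm
      obtain ⟨p, hp⟩ := h2 u v
      rcases walkAnalysis G hne' p hp with hc | ⟨w, h1, h2', h3⟩
      · exact hu' hc
      · by_cases hw : w.1 = v.1
        · exact hne' (h2' ▸ hw).symm.symm
        · exact hv' ⟨w, h3.symm, fun h => hw h.symm⟩
    -- community u.1 contains a central vertex
    have hj : ∃ j : Fin r, j ≠ u.1 := by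
      by_cases h0 : u.1 = ⟨0, by omega⟩
      · exact ⟨⟨1, by omega⟩, by simp [h0, Fin.ext_iff]⟩
      · exact ⟨⟨0, by omega⟩, fun h => h0 h.symm⟩
    obtain ⟨j, hjne⟩ := hj
    have hne : u.1 ≠ (j, u.2).1 := fun h => hjne h.symm
    obtain ⟨p, hp⟩ := h2 u (j, u.2)
    have hw : ∃ w : Fin r × Fin n, IsCentral G w ∧ w.1 = u.1 := by
      rcases walkAnalysis G hne p hp with hc | ⟨w, h1, h2', h3⟩
      · exact absurd hc hu'
      · by_cases hwj : w.1 = j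
        · exact absurd (h2' ▸ hwj : u.1 = j).symm hjne
        · exact ⟨w, ⟨(j, u.2), h3, hwj⟩, h2'⟩
    obtain ⟨w, hwc, hwu⟩ := hw
    have hwS : w ∉ Sᶜ := fun h => h hwc
    have hins : insert w Sᶜ ⊆ {v | v.1 = u.1} := by
      intro v hv
      rcases hv with rfl | hv
      · exact hwu
      · exact hsub hv
    have hfin : (Sᶜ : Set (Fin r × Fin n)).Finite := Set.toFinite _
    have hcard : Sᶜ.ncard + 1 ≤ n := by
      have := Set.ncard_le_ncard hins (Set.toFinite _)
      rwa [Set.ncard_insert_of_notMem hwS hfin, fiber_ncard u.1] at this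
    rw [hcc]
    omega
end

section
/- For every r ≥ 2 and n ≥ 1, there exists a global graph with r communities of n vertices each (each inducing a complete graph) that has diameter at most 2 and has exactly (r−1)·n bridges and exactly (r−1)·n + 1 central vertices. -/
open SimpleGraph

variable {r n : ℕ}

-- cardinality of {w | w.1 ≠ a}
lemma card_ne_fst (a : Fin r) : ({w : Fin r × Fin n | w.1 ≠ a}).ncard = (r - 1) * n := by
  rw [Set.ncard_eq_toFinset_card']
  have : ({w : Fin r × Fin n | w.1 ≠ a}).toFinset
      = (Finset.univ.filter (· ≠ a)) ×ˢ Finset.univ := by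
    ext w; simp [Set.mem_toFinset]
  rw [this, Finset.card_product, Finset.filter_ne', Finset.card_erase_of_mem (Finset.mem_univ a)]
  simp [Fintype.card_fin]

theorem stmt_5 (r n : ℕ) (hr : 2 ≤ r) (hn : 1 ≤ n) :
    ∃ G : SimpleGraph (Fin r × Fin n), IntraComplete G ∧ DiamLe G 2 ∧
      bridgeCount G = (r - 1) * n ∧ centralCount G = (r - 1) * n + 1 := by
  set h : Fin r × Fin n := (⟨0, by omega⟩, ⟨0, by omega⟩) with hh
  set G : SimpleGraph (Fin r × Fin n) :=
    SimpleGraph.fromRel (fun u v => u.1 = v.1 ∨ u = h) with hG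
  have hAdj : ∀ u v, G.Adj u v ↔ u ≠ v ∧ (u.1 = v.1 ∨ u = h ∨ v = h) := by
    intro u v
    simp only [hG, fromRel_adj]
    constructor
    · rintro ⟨hne, (h1 | h1) | (h1 | h1)⟩ <;> tauto
    · rintro ⟨hne, h1 | h1 | h1⟩ <;> tauto
  refine ⟨G, ?_, ?_, ?_, ?_⟩
  · intro u v huv h1; rw [hAdj]; tauto
  · intro u v
    by_cases huv : u = v
    · subst huv; exact ⟨Walk.nil, by simp⟩
    by_cases hsame : u.1 = v.1
    · exact ⟨Walk.cons ((hAdj u v).2 ⟨huv, Or.inl hsame⟩) Walk.nil, by simp⟩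
    by_cases hu : u = h
    · exact ⟨Walk.cons ((hAdj u v).2 ⟨huv, Or.inr (Or.inl hu)⟩) Walk.nil, by simp⟩
    by_cases hv : v = h
    · exact ⟨Walk.cons ((hAdj u v).2 ⟨huv, Or.inr (Or.inr hv)⟩) Walk.nil, by simp⟩
    · refine ⟨Walk.cons ((hAdj u h).2 ⟨hu, by tauto⟩)
        (Walk.cons ((hAdj h v).2 ⟨Ne.symm hv, by tauto⟩) Walk.nil), by simp⟩
  · -- bridgeCount
    have hset : {e ∈ G.edgeSet | ¬ (Sym2.map Prod.fst e).IsDiag}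
        = (fun w => s(h, w)) '' {w | w.1 ≠ h.1} := by
      ext e
      refine Sym2.ind (fun u v => ?_) e
      simp only [Set.mem_setOf_eq, mem_edgeSet, Sym2.map_pair_eq, Sym2.isDiag_iff_proj_eq,
        Set.mem_image]
      constructor
      · rintro ⟨hadj, hne⟩
        rcases (hAdj u v).1 hadj with ⟨-, h1 | h1 | h1⟩
        · exact absurd h1 hne
        · exact ⟨v, by rw [h1] at hne; exact (Ne.symm hne), by rw [h1]⟩
        · exact ⟨u, by rw [h1] at hne; exact hne, by rw [h1, Sym2.eq_swap]⟩
      · rintro ⟨w, hw, he⟩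
        have hwh : h ≠ w := fun e => hw (by rw [← e])
        have hmain : G.Adj h w ∧ ¬ (h.1 = w.1) :=
          ⟨(hAdj h w).2 ⟨hwh, Or.inr (Or.inl rfl)⟩, fun e => hw e.symm⟩
        rcases Sym2.eq_iff.1 he with ⟨rfl, rfl⟩ | ⟨rfl, rfl⟩
        · exact hmain
        · exact ⟨hmain.1.symm, fun e => hmain.2 e.symm⟩
    rw [bridgeCount, hset, Set.ncard_image_of_injOn, card_ne_fst]
    intro w hw w' hw' he
    rcases Sym2.eq_iff.1 he with ⟨-, h2⟩ | ⟨h1, -⟩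
    · exact h2
    · exact absurd (congrArg Prod.fst h1.symm) hw'
  · -- centralCount
    have hset : {v | IsCentral G v} = insert h {w : Fin r × Fin n | w.1 ≠ h.1} := by
      ext v
      simp only [Set.mem_setOf_eq, Set.mem_insert_iff, IsCentral]
      constructor
      · rintro ⟨w, hadj, hne⟩
        rcases (hAdj v w).1 hadj with ⟨-, h1 | h1 | h1⟩
        · exact absurd h1 hne
        · exact Or.inl h1
        · exact Or.inr (by rw [h1] at hne; exact hne)
      · rintro (rfl | hv)
        · refine ⟨(⟨1, by omega⟩, ⟨0, by omega⟩), ?_, ?_⟩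
          · refine (hAdj _ _).2 ⟨?_, Or.inr (Or.inl rfl)⟩
            simp [hh, Prod.ext_iff, Fin.ext_iff]
          · simp [hh, Fin.ext_iff]
        · have hvh : v ≠ h := fun e => hv (by rw [e])
          exact ⟨h, (hAdj v h).2 ⟨hvh, Or.inr (Or.inr rfl)⟩, hv⟩
    rw [centralCount, hset, Set.ncard_insert_of_notMem (by simp), card_ne_fst]
end
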